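/- arXiv:1304.5954 — 4 statements merged into one kernel-verified Lean document; each statement's English description precedes it below -/
import Mathlib

section
/- Let (M, ·, 1) be a monoid and ⋆ a semi-monoidal tensor on M that is strictly associative, and suppose the maps x ↦ x ⋆ 1 and x ↦ 1 ⋆ x are injective. Then x ⋆ 1 = x = 1 ⋆ x for every x ∈ M; in particular the maps x ↦ x ⋆ 1 and x ↦ 1 ⋆ x are bijective (i.e., the unique object is the Saavedra unit, so no monoid with a faithful non-unit object admits a strictly associative semi-monoidal tensor). -/
section IdempotentTranslation

variable {α : Type*} (op : α → α → α) {e : α}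

theorem op_right_eq_self_of_injective (he : op e e = e)
    (hassoc : ∀ a b c : α, op a (op b c) = op (op a b) c)
    (hinj : Function.Injective (fun x : α => op x e)) (x : α) : op x e = x :=
  hinj (show op (op x e) e = op x e by rw [← hassoc, he])

theorem op_left_eq_self_of_injective (he : op e e = e)
    (hassoc : ∀ a b c : α, op a (op b c) = op (op a b) c)
    (hinj : Function.Injective (fun x : α => op e x)) (x : α) : op e x = x :=
  hinj (show op e (op e x) = op e x by rw [hassoc, he])

end IdempotentTranslation

theorem stmt_1_general {M : Type*} [Monoid M] (star : M → M → M)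
    (hunit : star 1 1 = 1)
    (hassoc : ∀ a b c : M, star a (star b c) = star (star a b) c)
    (hR : Function.Injective (fun x : M => star x 1))
    (hL : Function.Injective (fun x : M => star 1 x)) :
    (∀ x : M, star x 1 = x ∧ star 1 x = x) ∧
    Function.Bijective (fun x : M => star x 1) ∧
    Function.Bijective (fun x : M => star 1 x) := by
  have hright := op_right_eq_self_of_injective star hunit hassoc hR
  have hleft := op_left_eq_self_of_injective star hunit hassoc hL
  refine ⟨fun x => ⟨hright x, hleft x⟩, ?_, ?_⟩
  · exact (funext hright : (fun x => star x 1) = id) ▸ Function.bijective_id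
  · exact (funext hleft : (fun x => star 1 x) = id) ▸ Function.bijective_id

/-- A strictly associative semi-monoidal tensor on a monoid, whose
translations by the monoid unit are injective, makes the unit a strict unit for
the tensor; in particular the translations are bijective (Saavedra unit). -/
theorem stmt_1 {M : Type*} [Monoid M] (star : M → M → M)
    (hunit : star 1 1 = 1)
    (hinterchange : ∀ a b c d : M, star (a * c) (b * d) = star a b * star c d)
    (hassoc : ∀ a b c : M, star a (star b c) = star (star a b) c)
    (hR : Function.Injective (fun x : M => star x 1))
    (hL : Function.Injective (fun x : M => star 1 x)) :
    (∀ x : M, star x 1 = x ∧ star 1 x = x) ∧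
    Function.Bijective (fun x : M => star x 1) ∧
    Function.Bijective (fun x : M => star 1 x) :=
  stmt_1_general star hunit hassoc hR hL
end

section
/- Let C be a monoidal category, S an object of C, and d : S ⊗ S ≅ S a self-similar structure. Then the induced associator a ∈ End(S) is natural for the induced tensor ⋆: for all f, g, h ∈ End(S), (f ⋆ (g ⋆ h)) ≫ a = a ≫ ((f ⋆ g) ⋆ h). -/
open CategoryTheory MonoidalCategory

/-!
Conjugating by `d` identifies `f ⋆ (g ⋆ h)` with `f ⊗ (g ⊗ h)` transported along
`D₁ := (𝟙 ⊗ d) ≫ d : S ⊗ (S ⊗ S) ≅ S`, and `(f ⋆ g) ⋆ h` with `(f ⊗ g) ⊗ h` transported along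
`D₂ := (d ⊗ 𝟙) ≫ d : (S ⊗ S) ⊗ S ≅ S`, while `a` is `α⁻¹` transported along the pair `(D₁, D₂)`.
Naturality of `a` is therefore the naturality of `α⁻¹`.
-/

namespace CategoryTheory

lemma Iso.conj_comp_eq_comp_conj {C : Type*} [Category C] {X X' Y : C}
    (e : X ≅ Y) (e' : X' ≅ Y) {u : X ⟶ X} {v : X' ⟶ X'} {φ : X ⟶ X'} (h : u ≫ φ = φ ≫ v) :
    e.conj u ≫ (e.inv ≫ φ ≫ e'.hom) = (e.inv ≫ φ ≫ e'.hom) ≫ e'.conj v := by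
  simp only [Iso.conj_apply, Category.assoc, Iso.hom_inv_id_assoc, reassoc_of% h]

namespace MonoidalCategory

variable {C : Type*} [Category C] [MonoidalCategory C]

lemma conj_tensorHom_conj {X X' Y Y' : C} (e : X ≅ X') (e' : Y ≅ Y') (f : X ⟶ X) (g : Y ⟶ Y) :
    e.conj f ⊗ₘ e'.conj g = (e ⊗ᵢ e').conj (f ⊗ₘ g) := by
  simp only [Iso.conj_apply, tensorIso_inv, tensorIso_hom, tensorHom_comp_tensorHom]

lemma tensorHom_conj {X Y Y' : C} (e : Y ≅ Y') (f : X ⟶ X) (g : Y ⟶ Y) :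
    f ⊗ₘ e.conj g = (Iso.refl X ⊗ᵢ e).conj (f ⊗ₘ g) := by
  rw [← conj_tensorHom_conj, Iso.refl_conj]

lemma conj_tensorHom {X X' Y : C} (e : X ≅ X') (f : X ⟶ X) (g : Y ⟶ Y) :
    e.conj f ⊗ₘ g = (e ⊗ᵢ Iso.refl Y).conj (f ⊗ₘ g) := by
  rw [← conj_tensorHom_conj, Iso.refl_conj]

end MonoidalCategory

end CategoryTheory

/-- For a self-similar structure `d : S ⊗ S ≅ S`, the induced
associator `a := d.inv ≫ (𝟙 S ⊗ d.inv) ≫ (α_ S S S).inv ≫ (d.hom ⊗ 𝟙 S) ≫ d.hom`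
is natural for the induced tensor `f ⋆ g := d.inv ≫ (f ⊗ g) ≫ d.hom`:
`(f ⋆ (g ⋆ h)) ≫ a = a ≫ ((f ⋆ g) ⋆ h)` for all `f, g, h ∈ End(S)`. -/
theorem stmt_4 {C : Type*} [Category C] [MonoidalCategory C] (S : C)
    (d : S ⊗ S ≅ S)
    (star : (S ⟶ S) → (S ⟶ S) → (S ⟶ S))
    (hstar : ∀ f g : S ⟶ S, star f g = d.inv ≫ (f ⊗ₘ g) ≫ d.hom)
    (a : S ⟶ S)
    (ha : a = d.inv ≫ (𝟙 S ⊗ₘ d.inv) ≫ (α_ S S S).inv ≫ (d.hom ⊗ₘ 𝟙 S) ≫ d.hom) :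
    ∀ f g h : S ⟶ S, star f (star g h) ≫ a = a ≫ star (star f g) h := by
  intro f g h
  set D₁ : S ⊗ (S ⊗ S) ≅ S := (Iso.refl S ⊗ᵢ d) ≪≫ d
  set D₂ : (S ⊗ S) ⊗ S ≅ S := (d ⊗ᵢ Iso.refl S) ≪≫ d
  have hstar_conj : ∀ f g : S ⟶ S, star f g = d.conj (f ⊗ₘ g) := hstar
  have hleft : star f (star g h) = D₁.conj (f ⊗ₘ g ⊗ₘ h) := by
    rw [hstar_conj, hstar_conj, tensorHom_conj, Iso.trans_conj]
  have hright : star (star f g) h = D₂.conj ((f ⊗ₘ g) ⊗ₘ h) := by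
    rw [hstar_conj, hstar_conj, conj_tensorHom, Iso.trans_conj]
  have ha_conj : a = D₁.inv ≫ (α_ S S S).inv ≫ D₂.hom := by
    simp only [ha, D₁, D₂, Iso.trans_inv, Iso.trans_hom, tensorIso_inv, tensorIso_hom,
      Iso.refl_inv, Iso.refl_hom, Category.assoc]
  rw [hleft, hright, ha_conj]
  exact Iso.conj_comp_eq_comp_conj D₁ D₂ (associator_inv_naturality f g h)
end

section
/- Let C be a monoidal category, S an object of C, and d : S ⊗ S ≅ S a self-similar structure. Then the induced associator a ∈ End(S) satisfies MacLane's pentagon condition for the induced tensor ⋆: (𝟙_S ⋆ a) ≫ a ≫ (a ⋆ 𝟙_S) = a ≫ a. (Together with functoriality and naturality, this makes (End(S), ⋆, a) a semi-monoidal monoid.) -/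
/-!
Splitting `S` into four factors with `d.inv` (right-nested) and merging them back with `d.hom`
(left-nested), both sides of the pentagon for `a` become conjugates of the two sides of the pentagon
identity for `(α_ _ _ _).inv` in `C`: the inner `d.hom ≫ d.inv` cancel, and the remaining copies of
`d` are moved past the associators by naturality and the interchange law.
-/

open CategoryTheory MonoidalCategory

namespace CategoryTheory.SelfSimilar

variable {C : Type*} [Category C] [MonoidalCategory C] {S : C} (d : S ⊗ S ≅ S)

def tensorHom (f g : S ⟶ S) : S ⟶ S := d.inv ≫ (f ⊗ₘ g) ≫ d.hom

def associator : S ⟶ S := d.inv ≫ S ◁ d.inv ≫ (α_ S S S).inv ≫ d.hom ▷ S ≫ d.hom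

def splitRight : S ⟶ S ⊗ S ⊗ S ⊗ S := d.inv ≫ S ◁ d.inv ≫ S ◁ S ◁ d.inv

def mergeLeft : ((S ⊗ S) ⊗ S) ⊗ S ⟶ S := d.hom ▷ S ▷ S ≫ d.hom ▷ S ≫ d.hom

theorem associator_comp_associator :
    associator d ≫ associator d =
      splitRight d ≫ (α_ S S (S ⊗ S)).inv ≫ (α_ (S ⊗ S) S S).inv ≫ mergeLeft d := by
  simp only [associator, splitRight, mergeLeft, Category.assoc, Iso.hom_inv_id_assoc]
  rw [← whisker_exchange_assoc, associator_inv_naturality_left_assoc,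
    ← associator_inv_naturality_right_assoc]

theorem id_tensorHom_associator_comp_associator_comp_tensorHom_id :
    tensorHom d (𝟙 S) (associator d) ≫ associator d ≫ tensorHom d (associator d) (𝟙 S) =
      splitRight d ≫ S ◁ (α_ S S S).inv ≫ (α_ S (S ⊗ S) S).inv ≫ (α_ S S S).inv ▷ S ≫
        mergeLeft d := by
  simp only [tensorHom, associator, splitRight, mergeLeft, id_tensorHom, tensorHom_id,
    whiskerLeft_comp, comp_whiskerRight, Category.assoc, Iso.hom_inv_id_assoc,
    whiskerLeft_hom_inv_assoc, hom_inv_whiskerRight_assoc, associator_inv_naturality_middle_assoc]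
  rw [← comp_whiskerRight_assoc, whiskerLeft_hom_inv, id_whiskerRight, Category.id_comp]

theorem pentagon :
    tensorHom d (𝟙 S) (associator d) ≫ associator d ≫ tensorHom d (associator d) (𝟙 S) =
      associator d ≫ associator d := by
  rw [id_tensorHom_associator_comp_associator_comp_tensorHom_id, associator_comp_associator,
    pentagon_inv_assoc]

end CategoryTheory.SelfSimilar

/-- For a self-similar structure `d : S ⊗ S ≅ S`, the induced
associator `a` satisfies MacLane's pentagon condition for the induced tensor:
`(𝟙 S ⋆ a) ≫ a ≫ (a ⋆ 𝟙 S) = a ≫ a`. -/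
theorem stmt_5 {C : Type*} [Category C] [MonoidalCategory C] (S : C)
    (d : S ⊗ S ≅ S)
    (star : (S ⟶ S) → (S ⟶ S) → (S ⟶ S))
    (hstar : ∀ f g : S ⟶ S, star f g = d.inv ≫ (f ⊗ₘ g) ≫ d.hom)
    (a : S ⟶ S)
    (ha : a = d.inv ≫ (𝟙 S ⊗ₘ d.inv) ≫ (α_ S S S).inv ≫ (d.hom ⊗ₘ 𝟙 S) ≫ d.hom) :
    star (𝟙 S) a ≫ a ≫ star a (𝟙 S) = a ≫ a := by
  obtain rfl : star = SelfSimilar.tensorHom d := funext₂ hstar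
  obtain rfl : a = SelfSimilar.associator d := by
    rw [ha, id_tensorHom, tensorHom_id, SelfSimilar.associator]
  exact SelfSimilar.pentagon d
end

section
/- Let C be a monoidal category, S an object of C, and d : S ⊗ S ≅ S a self-similar structure. Let A, B, E be objects equipped with isomorphisms c_A : A ≅ S, c_B : B ≅ S, c_E : E ≅ S. Then the convolution of the inverse associator (α_{A,B,E}).inv : A ⊗ (B ⊗ E) ⟶ (A ⊗ B) ⊗ E along the composite code isomorphisms c_{A⊗(B⊗E)} and c_{(A⊗B)⊗E} equals the induced associator a; that is, c_{A⊗(B⊗E)}.inv ≫ (α_{A,B,E}).inv ≫ c_{(A⊗B)⊗E}.hom = a. (In particular this convolution is independent of A, B, E.) -/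
open CategoryTheory MonoidalCategory

/-!
The convolution `c.inv ≫ f ≫ c'.hom` is `Iso.homCongr c c' f`. The two composite codes factor as
`cA ⊗ (cB ⊗ cE)` resp. `(cA ⊗ cB) ⊗ cE` followed by `S ◁ d ≪≫ d` resp. `d ▷ S ≪≫ d`.
Conjugating `α⁻¹` along the first factors gives `(α_ S S S).inv` by naturality of the associator,
and conjugating that along the second factors is exactly the induced associator.
-/

section

variable {C : Type*} [Category C] [MonoidalCategory C]

lemma tensorIso_trans_right {X X' Y Y' Y'' : C} (f : X ≅ X') (g : Y ≅ Y') (k : Y' ≅ Y'') :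
    f ⊗ᵢ (g ≪≫ k) = (f ⊗ᵢ g) ≪≫ (X' ◁ᵢ k) :=
  Iso.ext (by simp [tensorHom_comp_tensorHom, ← id_tensorHom])

lemma tensorIso_trans_left {X X' X'' Y Y' : C} (f : X ≅ X') (k : X' ≅ X'') (g : Y ≅ Y') :
    (f ≪≫ k) ⊗ᵢ g = (f ⊗ᵢ g) ≪≫ (k ▷ᵢ Y') :=
  Iso.ext (by simp [tensorHom_comp_tensorHom, ← tensorHom_id])

lemma homCongr_associator_inv {X X' Y Y' Z Z' : C} (f : X ≅ X') (g : Y ≅ Y') (h : Z ≅ Z') :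
    (f ⊗ᵢ g ⊗ᵢ h).homCongr ((f ⊗ᵢ g) ⊗ᵢ h) (α_ X Y Z).inv = (α_ X' Y' Z').inv := by
  rw [Iso.homCongr_apply, tensorIso_inv, tensorIso_inv, tensorIso_hom, tensorIso_hom,
    associator_inv_naturality_assoc]
  simp

end

/-- The convolution of the inverse associator
`(α_ A B E).inv : A ⊗ (B ⊗ E) ⟶ (A ⊗ B) ⊗ E` along the composite code
isomorphisms equals the induced associator `a` (independently of `A,B,E`). -/
theorem stmt_7 {C : Type*} [Category C] [MonoidalCategory C] (S : C)
    (d : S ⊗ S ≅ S)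
    (a : S ⟶ S)
    (ha : a = d.inv ≫ (𝟙 S ⊗ₘ d.inv) ≫ (α_ S S S).inv ≫ (d.hom ⊗ₘ 𝟙 S) ≫ d.hom)
    (A B E : C) (cA : A ≅ S) (cB : B ≅ S) (cE : E ≅ S) :
    ((tensorIso cA ((tensorIso cB cE) ≪≫ d)) ≪≫ d).inv ≫ (α_ A B E).inv ≫
      ((tensorIso ((tensorIso cA cB) ≪≫ d) cE) ≪≫ d).hom = a := by
  change Iso.homCongr _ _ (α_ A B E).inv = a
  rw [tensorIso_trans_right, tensorIso_trans_left, Iso.trans_assoc, Iso.trans_assoc,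
    Iso.homCongr_trans, Equiv.trans_apply, homCongr_associator_inv, ha]
  simp
end
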